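/- Let V be a finite-dimensional real inner product space, W ⊆ V a subspace, and P_W : V → V the orthogonal projection onto W. Then for every n, the n-th exterior power map Λⁿ P_W : ΛⁿV → ΛⁿV is the orthogonal projection onto ΛⁿW, with respect to the inner product on ΛⁿV determined by ⟨v₁∧⋯∧vₙ, w₁∧⋯∧wₙ⟩ = det(⟨vᵢ,wⱼ⟩). -/

import Mathlib

/-!
A linear map `T` is the orthogonal projection onto `K` as soon as its range lies in `K` and
`x - T x ⟂ K` for all `x`; both conditions may be checked on spanning sets. Since `ΛⁿV` is
spanned by wedges, `Λⁿ P_W` maps it into `ΛⁿW`. For the orthogonality, `⟪P_W v, w⟫ = ⟪v, w⟫`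
whenever `w ∈ W`, so the Gram matrices of `(v, u)` and `(P_W ∘ v, u)` coincide for `u ∈ Wⁿ`,
and the wedges of `v` and of `P_W ∘ v` have the same inner product with the wedge of `u`.
-/

open Submodule LinearMap

theorem LinearMap.range_eq_span_image_of_span_eq_top {R M N : Type*} [Semiring R]
    [AddCommMonoid M] [Module R M] [AddCommMonoid N] [Module R N] {s : Set M}
    (hs : span R s = ⊤) (f : M →ₗ[R] N) : range f = span R (f '' s) := by
  rw [← Submodule.map_top, ← hs, map_span]

theorem LinearMap.eq_starProjection_of_range_le_of_isOrtho {𝕜 E : Type*} [RCLike 𝕜]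
    [NormedAddCommGroup E] [InnerProductSpace 𝕜 E] {K : Submodule 𝕜 E}
    [K.HasOrthogonalProjection] {T : E →ₗ[𝕜] E} (hrange : range T ≤ K)
    (hortho : range (id - T) ⟂ K) :
    T = K.subtype ∘ₗ K.orthogonalProjectionOnto.toLinearMap := by
  ext x
  exact (eq_starProjection_of_mem_of_inner_eq_zero (hrange (mem_range_self T x))
    fun w hw => hortho.inner_eq (mem_range_self (id - T) x) hw).symm

theorem inner_apply_starProjection_comp_of_gram {V E ι : Type*}
    [NormedAddCommGroup V] [InnerProductSpace ℝ V] [NormedAddCommGroup E] [InnerProductSpace ℝ E]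
    [Fintype ι] [DecidableEq ι] (f : (ι → V) → E)
    (hGram : ∀ v w : ι → V,
      (inner ℝ (f v) (f w) : ℝ) = Matrix.det (Matrix.of fun i j => (inner ℝ (v i) (w j) : ℝ)))
    (W : Submodule ℝ V) [W.HasOrthogonalProjection] (v : ι → V) {u : ι → V}
    (hu : ∀ i, u i ∈ W) :
    (inner ℝ (f (W.starProjection ∘ v)) (f u) : ℝ) = inner ℝ (f v) (f u) := by
  simp only [hGram, Function.comp_apply, inner_starProjection_left_eq_right,
    starProjection_eq_self_iff.mpr (hu _)]

/-- The n-th exterior power of a finite-dimensional real inner product space `V` is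
presented abstractly as an inner product space `E` together with an alternating map
`ιM : V^n → E` whose image spans `E` and whose inner products are given by the Gram
determinant formula.  `ΛP` is the induced map `Λⁿ P_W` (characterized on generators),
and `ΛⁿW` is the span of the wedges of vectors of `W`.  The theorem: `Λⁿ P_W` is the
orthogonal projection onto `ΛⁿW`. -/
theorem stmt_3 {V E : Type*}
    [NormedAddCommGroup V] [InnerProductSpace ℝ V] [FiniteDimensional ℝ V]
    [NormedAddCommGroup E] [InnerProductSpace ℝ E] [FiniteDimensional ℝ E]
    (n : ℕ) (ιM : V [⋀^Fin n]→ₗ[ℝ] E)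
    (hspan : Submodule.span ℝ (Set.range fun v : Fin n → V => ιM v) = ⊤)
    (hGram : ∀ v w : Fin n → V,
      (inner ℝ (ιM v) (ιM w) : ℝ) =
        Matrix.det (Matrix.of fun i j => (inner ℝ (v i) (w j) : ℝ)))
    (W : Submodule ℝ V)
    (P : V →ₗ[ℝ] V) (hP : P = W.subtype ∘ₗ W.orthogonalProjectionOnto.toLinearMap)
    (ΛP : E →ₗ[ℝ] E) (hΛP : ∀ v : Fin n → V, ΛP (ιM v) = ιM fun i => P (v i))
    (ΛW : Submodule ℝ E)
    (hΛW : ΛW = Submodule.span ℝ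
      {x : E | ∃ v : Fin n → V, (∀ i, v i ∈ W) ∧ x = ιM v}) :
    ΛP = ΛW.subtype ∘ₗ ΛW.orthogonalProjectionOnto.toLinearMap := by
  have hΛP' : ∀ v, ΛP (ιM v) = ιM (W.starProjection ∘ v) := by
    intro v; rw [hΛP, hP]; rfl
  apply eq_starProjection_of_range_le_of_isOrtho
  · rw [range_eq_span_image_of_span_eq_top hspan, span_le, hΛW]
    rintro _ ⟨_, ⟨v, rfl⟩, rfl⟩
    exact subset_span ⟨_, fun i => W.starProjection_apply_mem (v i), hΛP' v⟩
  · rw [range_eq_span_image_of_span_eq_top hspan, hΛW, isOrtho_span]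
    rintro _ ⟨_, ⟨v, rfl⟩, rfl⟩ _ ⟨u, hu, rfl⟩
    rw [LinearMap.sub_apply, id_apply, hΛP', inner_sub_left,
      inner_apply_starProjection_comp_of_gram ιM hGram W v hu, sub_self]
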